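/- arXiv:2006.10375 — 6 statements merged into one kernel-verified Lean document; each statement's English description precedes it below -/
import Mathlib

section
/- Let L ⊣ R be an adjunction between tensor categories with L a (strong) symmetric monoidal functor, and equip R with the induced lax monoidal structure. Let A = R(𝟙) with its induced commutative monoid structure. Then the natural map π : A ⊗ X → RL(X), defined as the projection map at (𝟙, X), is a morphism of monads on the source category, from the monad A ⊗ (−) to the monad RL. -/
/-!
Identify `lax` and `iota` with the lax monoidal structure `μ, ε` that the adjunction puts on
`R`. Then `A = R 𝟙` acts on every `R Y` by `μ_{𝟙,Y} ≫ R λ`, the multiplication of `A` is the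
action on `R 𝟙` itself, and `π_X` is the action on `RL X` precomposed with `A ◁ η_X`.
The unit law for `π` is then the left unitality of `R`, and the multiplication law is the
associativity of `R`, once the counit on the right-hand side is absorbed into the action by
its naturality and the triangle identity `η_{R Y} ≫ R ε_Y = 𝟙`.
-/

open CategoryTheory MonoidalCategory

universe v₁ v₂ u₁ u₂

namespace ProjectionMonadHom

variable {C : Type u₁} {D : Type u₂} [Category.{v₁} C] [Category.{v₂} D]
variable [MonoidalCategory C] [MonoidalCategory D]
variable [SymmetricCategory C] [SymmetricCategory D]
variable (L : C ⥤ D) (R : D ⥤ C) [L.Monoidal] (adj : L ⊣ R)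

/-- The lax monoidal structure map of the right adjoint `R` induced by the monoidal
structure of `L`: `λ_{Y,Y'} : R Y ⊗ R Y' ⟶ R (Y ⊗ Y')`. -/
def lax (Y Y' : D) : R.obj Y ⊗ R.obj Y' ⟶ R.obj (Y ⊗ Y') :=
  adj.unit.app (R.obj Y ⊗ R.obj Y') ≫
    R.map (Functor.OplaxMonoidal.δ L (R.obj Y) (R.obj Y') ≫
      (adj.counit.app Y ⊗ₘ adj.counit.app Y'))

/-- The lax monoidal unit of `R`: `ι : 𝟙_C ⟶ R (𝟙_D)`. -/
def iota : 𝟙_ C ⟶ R.obj (𝟙_ D) :=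
  adj.unit.app (𝟙_ C) ≫ R.map (Functor.OplaxMonoidal.η L)

/-- The induced multiplication on the commutative monoid `A = R (𝟙_D)`. -/
def mult : R.obj (𝟙_ D) ⊗ R.obj (𝟙_ D) ⟶ R.obj (𝟙_ D) :=
  lax L R adj (𝟙_ D) (𝟙_ D) ≫ R.map (λ_ (𝟙_ D)).hom

/-- The projection map `π = π_{𝟙,X} : A ⊗ X ⟶ R (𝟙 ⊗ L X) ≅ RL X`. -/
def pi (X : C) : R.obj (𝟙_ D) ⊗ X ⟶ R.obj (L.obj X) :=
  (R.obj (𝟙_ D) ◁ adj.unit.app X) ≫ lax L R adj (𝟙_ D) (L.obj X) ≫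
    R.map (λ_ (L.obj X)).hom

end ProjectionMonadHom

namespace CategoryTheory.Functor.LaxMonoidal

variable {C D : Type*} [Category C] [Category D] [MonoidalCategory C] [MonoidalCategory D]
  (R : D ⥤ C) [R.LaxMonoidal]

def unitAction (Y : D) : R.obj (𝟙_ D) ⊗ R.obj Y ⟶ R.obj Y :=
  μ R (𝟙_ D) Y ≫ R.map (λ_ Y).hom

lemma whiskerLeft_map_unitAction {Y Y' : D} (f : Y ⟶ Y') :
    R.obj (𝟙_ D) ◁ R.map f ≫ unitAction R Y' = unitAction R Y ≫ R.map f := by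
  rw [unitAction, unitAction, μ_natural_right_assoc, ← R.map_comp, leftUnitor_naturality,
    R.map_comp, Category.assoc]

lemma leftUnitor_inv_ε_unitAction (Y : D) :
    (λ_ (R.obj Y)).inv ≫ ε R ▷ R.obj Y ≫ unitAction R Y = 𝟙 _ := by
  rw [unitAction, left_unitality_inv_assoc, ← R.map_comp, Iso.inv_hom_id, R.map_id]

lemma associator_inv_unitAction (Y : D) :
    (α_ _ _ (R.obj Y)).inv ≫ unitAction R (𝟙_ D) ▷ R.obj Y ≫ unitAction R Y =
      R.obj (𝟙_ D) ◁ unitAction R Y ≫ unitAction R Y := by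
  have coherence : (λ_ (𝟙_ D)).hom ▷ Y ≫ (λ_ Y).hom =
      (α_ (𝟙_ D) (𝟙_ D) Y).hom ≫ 𝟙_ D ◁ (λ_ Y).hom ≫ (λ_ Y).hom := by
    monoidal_coherence
  rw [Iso.inv_comp_eq, unitAction, unitAction, comp_whiskerRight, Category.assoc,
    μ_natural_left_assoc, ← R.map_comp, coherence, R.map_comp, R.map_comp,
    associativity_assoc, MonoidalCategory.whiskerLeft_comp_assoc, μ_natural_right_assoc]

end CategoryTheory.Functor.LaxMonoidal

namespace ProjectionMonadHom

open Functor.LaxMonoidal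

section

variable {C : Type u₁} {D : Type u₂} [Category.{v₁} C] [Category.{v₂} D]
  [MonoidalCategory C] [MonoidalCategory D]
  (L : C ⥤ D) (R : D ⥤ C) [L.Monoidal] (adj : L ⊣ R) [R.LaxMonoidal] [adj.IsMonoidal]

lemma lax_eq_μ (Y Y' : D) : lax L R adj Y Y' = μ R Y Y' := by
  rw [Adjunction.IsMonoidal.leftAdjoint_μ (adj := adj)]
  rfl

lemma iota_eq_ε : iota L R adj = ε R := by
  rw [Adjunction.IsMonoidal.leftAdjoint_ε (adj := adj)]
  rfl

lemma mult_eq_unitAction : mult L R adj = unitAction R (𝟙_ D) := by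
  rw [mult, lax_eq_μ]
  rfl

lemma pi_eq_unitAction (X : C) :
    pi L R adj X = R.obj (𝟙_ D) ◁ adj.unit.app X ≫ unitAction R (L.obj X) := by
  rw [pi, lax_eq_μ]
  rfl

lemma leftUnitor_inv_iota_pi (X : C) :
    (λ_ X).inv ≫ iota L R adj ▷ X ≫ pi L R adj X = adj.unit.app X := by
  rw [iota_eq_ε, pi_eq_unitAction, ← whisker_exchange_assoc, ← leftUnitor_inv_naturality_assoc]
  dsimp only [Functor.comp_obj]
  rw [leftUnitor_inv_ε_unitAction, Category.comp_id]

lemma pi_comp_map_counit (X : C) :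
    pi L R adj (R.obj (L.obj X)) ≫ R.map (adj.counit.app (L.obj X)) = unitAction R (L.obj X) := by
  rw [pi_eq_unitAction, Category.assoc, ← whiskerLeft_map_unitAction,
    ← MonoidalCategory.whiskerLeft_comp_assoc, adj.right_triangle_components]
  simp only [Functor.id_obj, MonoidalCategory.whiskerLeft_id, Category.id_comp]

lemma associator_inv_mult_pi (X : C) :
    (α_ (R.obj (𝟙_ D)) (R.obj (𝟙_ D)) X).inv ≫ mult L R adj ▷ X ≫ pi L R adj X =
      R.obj (𝟙_ D) ◁ pi L R adj X ≫ pi L R adj (R.obj (L.obj X)) ≫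
        R.map (adj.counit.app (L.obj X)) := by
  rw [pi_comp_map_counit, mult_eq_unitAction, pi_eq_unitAction, ← whisker_exchange_assoc]
  dsimp only [Functor.comp_obj]
  rw [← associator_inv_naturality_right_assoc, associator_inv_unitAction,
    MonoidalCategory.whiskerLeft_comp_assoc]

end

variable {C : Type u₁} {D : Type u₂} [Category.{v₁} C] [Category.{v₂} D]
variable [MonoidalCategory C] [MonoidalCategory D]
variable [SymmetricCategory C] [SymmetricCategory D]
variable (L : C ⥤ D) (R : D ⥤ C) [L.Monoidal] (adj : L ⊣ R)

/-- **The projection map is a morphism of monads** from `A ⊗ (−)` to `RL`: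
it commutes with the units and with the multiplications of the two monads. -/
theorem pi_monadHom :
    -- compatibility with the units: `η^{A⊗(−)} ≫ π = η^{RL}`
    (∀ X : C,
      (λ_ X).inv ≫ (iota L R adj ▷ X) ≫ pi L R adj X = adj.unit.app X) ∧
    -- compatibility with the multiplications:
    -- `μ^{A⊗(−)} ≫ π = (A ◁ π) ≫ π_{RL X} ≫ μ^{RL}`
    (∀ X : C,
      (α_ (R.obj (𝟙_ D)) (R.obj (𝟙_ D)) X).inv ≫ (mult L R adj ▷ X) ≫ pi L R adj X =
        (R.obj (𝟙_ D) ◁ pi L R adj X) ≫ pi L R adj (R.obj (L.obj X)) ≫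
          R.map (adj.counit.app (L.obj X))) := by
  let : R.LaxMonoidal := adj.rightAdjointLaxMonoidal
  exact ⟨leftUnitor_inv_iota_pi L R adj, associator_inv_mult_pi L R adj⟩

end ProjectionMonadHom
end

section
/- Let F : C → D be a full and essentially surjective k-linear tensor functor between essentially small rigid k-linear tensor categories. Then for any two k-linear functors N, N' : D → Mod_k, the lax-monoidal structure map λ_{N,N'} : F*N ⊗_C F*N' → F*(N ⊗_D N') of the restriction functor F* is an isomorphism. -/
/-!
Statement 9: Let `F : C ⥤ D` be a full and essentially surjective `k`-linear tensor functor
between essentially small rigid `k`-linear tensor categories.  For any `k`-linear functors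
`N, N' : D ⥤ Mod_k`, the lax-monoidal structure map
`λ_{N,N'} : F*N ⊗_C F*N' ⟶ F*(N ⊗_D N')`
of the restriction functor `F*` is an isomorphism.  Pointwise at `c`, with Day convolutions
written as coends, `λ` sends a generator `[g, n, n']_{(u,v)}` (with `g : u ⊗ v ⟶ c`,
`n ∈ N(Fu)`, `n' ∈ N'(Fv)`) to `[μ_{u,v} ≫ F(g), n, n']_{(Fu,Fv)}`.

`k`-linear coends are computed as quotients of direct sums, via the unbundled
`CoendData` below.
-/

open CategoryTheory TensorProduct DirectSum MonoidalCategory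

universe u

variable (k : Type u) [CommRing k]

/-- Unbundled data for a `k`-linear coend `∫^{c ∈ E} H(c,c)`. -/
structure CoendData (E : Type u) [Category.{u} E] : Type (u + 1) where
  obj : E → E → ModuleCat.{u} k
  left : ∀ {c c' : E} (d : E), (c' ⟶ c) → (obj c d →ₗ[k] obj c' d)
  right : ∀ (c : E) {d d' : E}, (d ⟶ d') → (obj c d →ₗ[k] obj c d')

variable {k} {E : Type u} [Category.{u} E]

/-- The submodule of relations defining the coend. -/
noncomputable def CoendData.relations (H : CoendData k E) :
    Submodule k (⨁ c : E, (H.obj c c : Type u)) :=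
  letI := Classical.decEq E
  Submodule.span k {z | ∃ (c c' : E) (α : c' ⟶ c) (y : H.obj c c'),
    z = DirectSum.lof k E (fun c => (H.obj c c : Type u)) c' (H.left c' α y)
      - DirectSum.lof k E (fun c => (H.obj c c : Type u)) c (H.right c α y)}

/-- The `k`-linear coend `∫^{c} H(c,c)`. -/
noncomputable def CoendData.Coend (H : CoendData k E) : Type u :=
  (⨁ c : E, (H.obj c c : Type u)) ⧸ H.relations

noncomputable instance (H : CoendData k E) : AddCommGroup H.Coend :=
  inferInstanceAs (AddCommGroup ((⨁ c : E, (H.obj c c : Type u)) ⧸ H.relations))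

noncomputable instance (H : CoendData k E) : Module k H.Coend :=
  inferInstanceAs (Module k ((⨁ c : E, (H.obj c c : Type u)) ⧸ H.relations))

/-- The generator `[x]_c` of the coend. -/
noncomputable def CoendData.gen (H : CoendData k E) (c : E) (x : H.obj c c) : H.Coend :=
  letI := Classical.decEq E
  Submodule.Quotient.mk (DirectSum.lof k E (fun c => (H.obj c c : Type u)) c x)

section Lax

variable (k)
variable {C D : Type u} [Category.{u} C] [Category.{u} D]
  [Preadditive C] [Linear k C] [MonoidalCategory C] [SymmetricCategory C]
  [MonoidalPreadditive C] [MonoidalLinear k C] [RigidCategory C]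
  [Preadditive D] [Linear k D] [MonoidalCategory D] [SymmetricCategory D]
  [MonoidalPreadditive D] [MonoidalLinear k D] [RigidCategory D]
  (F : C ⥤ D) [F.Additive] [F.Linear k] [F.Monoidal]

/-- Coend data computing `(F*N ⊗_C F*N')(c) = ∫^{(u,v)} C(u ⊗ v, c) ⊗ N(Fu) ⊗ N'(Fv)`. -/
noncomputable def laxSrcData (N N' : D ⥤ ModuleCat.{u} k) (c : C) :
    CoendData k (C × C) where
  obj p q := ModuleCat.of k
    (((p.1 ⊗ p.2 : C) ⟶ c) ⊗[k]
      ((N.obj (F.obj q.1) : Type u) ⊗[k] (N'.obj (F.obj q.2) : Type u)))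
  left q φ := TensorProduct.map (Linear.leftComp k c (φ.1 ⊗ₘ φ.2)) LinearMap.id
  right p {q q'} ψ := TensorProduct.map LinearMap.id
    (TensorProduct.map (N.map (F.map ψ.1)).hom (N'.map (F.map ψ.2)).hom)

/-- Coend data computing `F*(N ⊗_D N')(c) = ∫^{(x,y)} D(x ⊗ y, F c) ⊗ N(x) ⊗ N'(y)`. -/
noncomputable def laxTgtData (N N' : D ⥤ ModuleCat.{u} k) (c : C) :
    CoendData k (D × D) where
  obj p q := ModuleCat.of k
    (((p.1 ⊗ p.2 : D) ⟶ F.obj c) ⊗[k]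
      ((N.obj q.1 : Type u) ⊗[k] (N'.obj q.2 : Type u)))
  left q φ := TensorProduct.map (Linear.leftComp k (F.obj c) (φ.1 ⊗ₘ φ.2)) LinearMap.id
  right p {q q'} ψ := TensorProduct.map LinearMap.id
    (TensorProduct.map (N.map ψ.1).hom (N'.map ψ.2).hom)

end Lax

/-!
The inverse of `λ` sends `[h, n, n']_{(x,y)}` to `[g, ε⁻¹ n, ε⁻¹ n']_{(x̄,ȳ)}`, where
`ε : F x̄ ≅ x` and `ε : F ȳ ≅ y` are chosen by essential surjectivity and `g : x̄ ⊗ ȳ ⟶ c` is a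
preimage, by fullness, of `F (x̄ ⊗ ȳ) ≅ x ⊗ y ⟶ F c`. The choice of `g` does not matter because a
generator `[g, n, n']_{(u,v)}` vanishes as soon as `F g = 0`: by rigidity `g = (u ◁ g') ≫ ev` for
the transpose `g' : v ⟶ ᘁu ⊗ c`, and the coend relation moves `g'` onto `n'`, where it acts by
`N' (F g') = 0`.
-/

namespace CoendData

variable (H : CoendData k E)

noncomputable def genLinearMap (i : E) : (H.obj i i : Type u) →ₗ[k] H.Coend :=
  letI := Classical.decEq E
  H.relations.mkQ ∘ₗ DirectSum.lof k E (fun c => (H.obj c c : Type u)) i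

lemma gen_zero (i : E) : H.gen i 0 = 0 := map_zero (H.genLinearMap i)

lemma gen_left_eq_gen_right {p q : E} (α : q ⟶ p) (y : H.obj p q) :
    H.gen q (H.left q α y) = H.gen p (H.right p α y) := by
  let _ : DecidableEq E := Classical.decEq E
  exact (Submodule.Quotient.eq _).2 (Submodule.subset_span ⟨p, q, α, y, rfl⟩)

def IsCowedge {M : Type*} [AddCommGroup M] [Module k M]
    (f : ∀ i : E, (H.obj i i : Type u) →ₗ[k] M) : Prop :=
  ∀ {p q : E} (α : q ⟶ p), f q ∘ₗ H.left q α = f p ∘ₗ H.right p α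

noncomputable def desc {M : Type*} [AddCommGroup M] [Module k M]
    (f : ∀ i : E, (H.obj i i : Type u) →ₗ[k] M) (hf : H.IsCowedge f) :
    H.Coend →ₗ[k] M :=
  letI := Classical.decEq E
  H.relations.liftQ (DirectSum.toModule k E M f) <| Submodule.span_le.2 <| by
    rintro _ ⟨p, q, α, y, rfl⟩
    simp only [SetLike.mem_coe, LinearMap.mem_ker, map_sub, DirectSum.toModule_lof]
    exact sub_eq_zero.2 (LinearMap.congr_fun (hf α) y)

@[simp]
lemma desc_gen {M : Type*} [AddCommGroup M] [Module k M]
    (f : ∀ i : E, (H.obj i i : Type u) →ₗ[k] M) (hf : H.IsCowedge f) (i : E) (x : H.obj i i) :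
    H.desc f hf (H.gen i x) = f i x := by
  let _ : DecidableEq E := Classical.decEq E
  exact (Submodule.liftQ_apply _ _ _).trans (DirectSum.toModule_lof k (φ := f) i x)

lemma hom_ext {M : Type*} [AddCommGroup M] [Module k M] {f g : H.Coend →ₗ[k] M}
    (h : ∀ i : E, f ∘ₗ H.genLinearMap i = g ∘ₗ H.genLinearMap i) : f = g := by
  let _ : DecidableEq E := Classical.decEq E
  exact Submodule.linearMap_qext _ (DirectSum.linearMap_ext _ h)

end CoendData

namespace LinearMap

variable {R A B M : Type*} [Ring R] [AddCommGroup A] [Module R A] [AddCommGroup B] [Module R B]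
  [AddCommGroup M] [Module R M]

noncomputable def liftOfSurjective (φ : A →ₗ[R] B) (hφ : Function.Surjective φ) (f : A →ₗ[R] M)
    (hf : ker φ ≤ ker f) : B →ₗ[R] M :=
  (ker φ).liftQ f hf ∘ₗ (φ.quotKerEquivOfSurjective hφ).symm.toLinearMap

@[simp]
lemma liftOfSurjective_apply (φ : A →ₗ[R] B) (hφ : Function.Surjective φ) (f : A →ₗ[R] M)
    (hf : ker φ ≤ ker f) (a : A) : φ.liftOfSurjective hφ f hf (φ a) = f a := by
  have : (φ.quotKerEquivOfSurjective hφ).symm (φ a) = Submodule.Quotient.mk a :=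
    (LinearEquiv.symm_apply_eq _).2 (quotKerEquivOfSurjective_apply_mk _ hφ a).symm
  simp only [liftOfSurjective, coe_comp, LinearEquiv.coe_coe, Function.comp_apply, this,
    Submodule.liftQ_apply]

end LinearMap

section TensorMap

variable {A : Type*} [Category A] (N N' : A ⥤ ModuleCat.{u} k)

noncomputable def tensorMap {x x' y y' : A} (a : x ⟶ x') (b : y ⟶ y') :
    ((N.obj x : Type u) ⊗[k] (N'.obj y : Type u)) →ₗ[k]
      ((N.obj x' : Type u) ⊗[k] (N'.obj y' : Type u)) :=
  TensorProduct.map (N.map a).hom (N'.map b).hom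

@[simp]
lemma tensorMap_id (x y : A) : tensorMap N N' (𝟙 x) (𝟙 y) = LinearMap.id := by
  simp [tensorMap]

lemma tensorMap_comp_apply {x x' x'' y y' y'' : A} (a : x ⟶ x') (a' : x' ⟶ x'') (b : y ⟶ y')
    (b' : y' ⟶ y'') (t : (N.obj x : Type u) ⊗[k] (N'.obj y : Type u)) :
    tensorMap N N' (a ≫ a') (b ≫ b') t = tensorMap N N' a' b' (tensorMap N N' a b t) := by
  simp [tensorMap, TensorProduct.map_comp]

@[simp]
lemma tensorMap_zero_right [Preadditive A] [N'.PreservesZeroMorphisms] {x x' y y' : A}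
    (a : x ⟶ x') : tensorMap N N' a (0 : y ⟶ y') = 0 := by
  simp [tensorMap]

end TensorMap

namespace CategoryTheory

variable {A B : Type*} [Category A] [Category B] [MonoidalCategory A] [MonoidalCategory B]

lemma whiskerLeft_tensorLeftHomEquiv_comp_symm_id {X Y Y' Z : A} [ExactPairing Y Y']
    (g : Y' ⊗ X ⟶ Z) :
    Y' ◁ tensorLeftHomEquiv X Y Y' Z g ≫ (tensorLeftHomEquiv (Y ⊗ Z) Y Y' Z).symm (𝟙 _) = g := by
  rw [← tensorLeftHomEquiv_symm_naturality, Category.comp_id, Equiv.symm_apply_apply]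

namespace Functor

lemma map_tensorLeftHomEquiv_eq_zero [Preadditive B] [MonoidalPreadditive B] (G : A ⥤ B)
    [G.Monoidal] {X Y Y' Z : A} [ExactPairing Y Y'] {g : Y' ⊗ X ⟶ Z} (hg : G.map g = 0) :
    G.map (tensorLeftHomEquiv X Y Y' Z g) = 0 := by
  simp [tensorLeftHomEquiv, Monoidal.map_whiskerLeft, hg]

variable (G : A ⥤ B) [G.Monoidal] [G.EssSurj]

noncomputable def tensorObjPreimageIso (x y : B) :
    G.obj (G.objPreimage x ⊗ G.objPreimage y) ≅ x ⊗ y :=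
  (Monoidal.μIso G _ _).symm ≪≫ (G.objObjPreimageIso x ⊗ᵢ G.objObjPreimageIso y)

lemma tensorObjPreimageIso_hom (x y : B) :
    (G.tensorObjPreimageIso x y).hom = OplaxMonoidal.δ G _ _ ≫
      ((G.objObjPreimageIso x).hom ⊗ₘ (G.objObjPreimageIso y).hom) := rfl

lemma map_tensorHom_comp_tensorObjPreimageIso_hom {x x' y y' : B} (a : x ⟶ x') (b : y ⟶ y')
    (γ₁ : G.objPreimage x ⟶ G.objPreimage x') (γ₂ : G.objPreimage y ⟶ G.objPreimage y')
    (h₁ : G.map γ₁ ≫ (G.objObjPreimageIso x').hom = (G.objObjPreimageIso x).hom ≫ a)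
    (h₂ : G.map γ₂ ≫ (G.objObjPreimageIso y').hom = (G.objObjPreimageIso y).hom ≫ b) :
    G.map (γ₁ ⊗ₘ γ₂) ≫ (G.tensorObjPreimageIso x' y').hom =
      (G.tensorObjPreimageIso x y).hom ≫ (a ⊗ₘ b) := by
  rw [Monoidal.map_tensor, tensorObjPreimageIso_hom, tensorObjPreimageIso_hom]
  simp only [Category.assoc, Monoidal.μ_δ_assoc, tensorHom_comp_tensorHom, h₁, h₂]

end Functor

end CategoryTheory

section LaxStructureMap

variable {C D : Type u} [Category.{u} C] [Category.{u} D] (F : C ⥤ D) (N N' : D ⥤ ModuleCat.{u} k)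
  (c : C)

section

variable [Preadditive C] [Linear k C] [MonoidalCategory C]

lemma laxSrcData_gen_tensorHom_comp {X X' Y Y' : C} (a : X' ⟶ X) (b : Y' ⟶ Y)
    (g : (X ⊗ Y : C) ⟶ c) (t : (N.obj (F.obj X') : Type u) ⊗[k] (N'.obj (F.obj Y') : Type u)) :
    (laxSrcData k F N N' c).gen (X', Y') (((a ⊗ₘ b) ≫ g) ⊗ₜ t) =
      (laxSrcData k F N N' c).gen (X, Y) (g ⊗ₜ tensorMap N N' (F.map a) (F.map b) t) :=
  (laxSrcData k F N N' c).gen_left_eq_gen_right (p := (X, Y)) (q := (X', Y')) (a, b) (g ⊗ₜ t)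

end

section

variable [Preadditive D] [Linear k D] [MonoidalCategory D]

lemma laxTgtData_gen_tensorHom_comp {x x' y y' : D} (a : x' ⟶ x) (b : y' ⟶ y)
    (h : (x ⊗ y : D) ⟶ F.obj c) (t : (N.obj x' : Type u) ⊗[k] (N'.obj y' : Type u)) :
    (laxTgtData k F N N' c).gen (x', y') (((a ⊗ₘ b) ≫ h) ⊗ₜ t) =
      (laxTgtData k F N N' c).gen (x, y) (h ⊗ₜ tensorMap N N' a b t) :=
  (laxTgtData k F N N' c).gen_left_eq_gen_right (p := (x, y)) (q := (x', y')) (a, b) (h ⊗ₜ t)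

end

variable [Preadditive C] [Linear k C] [MonoidalCategory C] [Preadditive D] [Linear k D]
  [MonoidalCategory D] [F.Additive] [F.Linear k] [F.Monoidal]

noncomputable def laxMapComponent (XY : C × C) :
    ((laxSrcData k F N N' c).obj XY XY : Type u) →ₗ[k] (laxTgtData k F N N' c).Coend :=
  (laxTgtData k F N N' c).genLinearMap (F.obj XY.1, F.obj XY.2) ∘ₗ
    TensorProduct.map (Linear.leftComp k (F.obj c) (Functor.LaxMonoidal.μ F XY.1 XY.2) ∘ₗ
      F.mapLinearMap k) LinearMap.id

lemma laxMapComponent_isCowedge :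
    (laxSrcData k F N N' c).IsCowedge (laxMapComponent F N N' c) := fun {p q} α =>
  TensorProduct.ext' fun g t => by
    change (laxTgtData k F N N' c).gen (F.obj q.1, F.obj q.2)
        ((Functor.LaxMonoidal.μ F q.1 q.2 ≫ F.map ((α.1 ⊗ₘ α.2) ≫ g)) ⊗ₜ t) =
      (laxTgtData k F N N' c).gen (F.obj p.1, F.obj p.2)
        ((Functor.LaxMonoidal.μ F p.1 p.2 ≫ F.map g) ⊗ₜ tensorMap N N' (F.map α.1) (F.map α.2) t)
    rw [F.map_comp, ← Functor.LaxMonoidal.μ_natural_assoc, laxTgtData_gen_tensorHom_comp]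

noncomputable def laxMap : (laxSrcData k F N N' c).Coend →ₗ[k] (laxTgtData k F N N' c).Coend :=
  (laxSrcData k F N N' c).desc (laxMapComponent F N N' c) (laxMapComponent_isCowedge F N N' c)

lemma laxMap_gen {X Y : C} (g : (X ⊗ Y : C) ⟶ c)
    (t : (N.obj (F.obj X) : Type u) ⊗[k] (N'.obj (F.obj Y) : Type u)) :
    laxMap F N N' c ((laxSrcData k F N N' c).gen (X, Y) (g ⊗ₜ t)) =
      (laxTgtData k F N N' c).gen (F.obj X, F.obj Y)
        ((Functor.LaxMonoidal.μ F X Y ≫ F.map g) ⊗ₜ t) :=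
  CoendData.desc_gen _ _ (laxMapComponent_isCowedge F N N' c) (X, Y) (g ⊗ₜ t)

end LaxStructureMap

section LaxInverse

variable {C D : Type u} [Category.{u} C] [Category.{u} D]
  [Preadditive C] [Linear k C] [MonoidalCategory C] [LeftRigidCategory C]
  [Preadditive D] [MonoidalCategory D] [MonoidalPreadditive D]
  (F : C ⥤ D) [F.Monoidal] (N N' : D ⥤ ModuleCat.{u} k) [N'.PreservesZeroMorphisms] (c : C)

lemma laxSrcData_gen_eq_zero {X Y : C} {g : (X ⊗ Y : C) ⟶ c} (hg : F.map g = 0)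
    (t : (N.obj (F.obj X) : Type u) ⊗[k] (N'.obj (F.obj Y) : Type u)) :
    (laxSrcData k F N N' c).gen (X, Y) (g ⊗ₜ t) = 0 := by
  rw [← whiskerLeft_tensorLeftHomEquiv_comp_symm_id (Y := ᘁX) g, ← id_tensorHom,
    laxSrcData_gen_tensorHom_comp, F.map_tensorLeftHomEquiv_eq_zero hg, tensorMap_zero_right,
    LinearMap.zero_apply, tmul_zero]
  exact CoendData.gen_zero _ _

variable [Linear k D] [F.Additive] [F.Linear k] [F.Full]

noncomputable def laxSrcGenOfMap (X Y : C) :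
    (F.obj (X ⊗ Y) ⟶ F.obj c) →ₗ[k]
      ((N.obj (F.obj X) : Type u) ⊗[k] (N'.obj (F.obj Y) : Type u)) →ₗ[k]
        (laxSrcData k F N N' c).Coend :=
  (F.mapLinearMap k).liftOfSurjective (fun h => F.map_surjective h)
    ((TensorProduct.mk k _ _).compr₂ ((laxSrcData k F N N' c).genLinearMap (X, Y)))
    fun _ hg => LinearMap.ext (laxSrcData_gen_eq_zero F N N' c hg)

lemma laxSrcGenOfMap_map {X Y : C} (g : (X ⊗ Y : C) ⟶ c)
    (t : (N.obj (F.obj X) : Type u) ⊗[k] (N'.obj (F.obj Y) : Type u)) :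
    laxSrcGenOfMap F N N' c X Y (F.map g) t = (laxSrcData k F N N' c).gen (X, Y) (g ⊗ₜ t) :=
  LinearMap.congr_fun (LinearMap.liftOfSurjective_apply _ _ _ _ g) t

variable [F.EssSurj]

noncomputable def laxInvComponent (xy : D × D) :
    ((laxTgtData k F N N' c).obj xy xy : Type u) →ₗ[k] (laxSrcData k F N N' c).Coend :=
  TensorProduct.lift <|
    (laxSrcGenOfMap F N N' c _ _ ∘ₗ
      Linear.leftComp k (F.obj c) (F.tensorObjPreimageIso xy.1 xy.2).hom).compl₂
      (tensorMap N N' (F.objObjPreimageIso xy.1).inv (F.objObjPreimageIso xy.2).inv)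

lemma laxInvComponent_tmul {x y : D} (h : (x ⊗ y : D) ⟶ F.obj c)
    {g : (F.objPreimage x ⊗ F.objPreimage y : C) ⟶ c}
    (hg : F.map g = (F.tensorObjPreimageIso x y).hom ≫ h)
    (t : (N.obj x : Type u) ⊗[k] (N'.obj y : Type u)) :
    laxInvComponent F N N' c (x, y) (h ⊗ₜ t) =
      (laxSrcData k F N N' c).gen (F.objPreimage x, F.objPreimage y)
        (g ⊗ₜ tensorMap N N' (F.objObjPreimageIso x).inv (F.objObjPreimageIso y).inv t) := by
  change laxSrcGenOfMap F N N' c _ _ ((F.tensorObjPreimageIso x y).hom ≫ h) _ = _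
  rw [← hg, laxSrcGenOfMap_map]

lemma laxInvComponent_isCowedge :
    (laxTgtData k F N N' c).IsCowedge (laxInvComponent F N N' c) := by
  intro p q β
  obtain ⟨x, y⟩ := p
  obtain ⟨x', y'⟩ := q
  obtain ⟨a, b⟩ := β
  refine TensorProduct.ext' fun h t => ?_
  obtain ⟨γ₁, hγ₁⟩ :=
    F.map_surjective ((F.objObjPreimageIso x').hom ≫ a ≫ (F.objObjPreimageIso x).inv)
  obtain ⟨γ₂, hγ₂⟩ :=
    F.map_surjective ((F.objObjPreimageIso y').hom ≫ b ≫ (F.objObjPreimageIso y).inv)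
  obtain ⟨g, hg⟩ := F.map_surjective ((F.tensorObjPreimageIso x y).hom ≫ h)
  have hnat := F.map_tensorHom_comp_tensorObjPreimageIso_hom a b γ₁ γ₂ (by simp [hγ₁])
    (by simp [hγ₂])
  have e₁ : (F.objObjPreimageIso x').inv ≫ F.map γ₁ = a ≫ (F.objObjPreimageIso x).inv := by
    simp [hγ₁]
  have e₂ : (F.objObjPreimageIso y').inv ≫ F.map γ₂ = b ≫ (F.objObjPreimageIso y).inv := by
    simp [hγ₂]
  change laxInvComponent F N N' c (x', y') (((a ⊗ₘ b) ≫ h) ⊗ₜ t) =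
    laxInvComponent F N N' c (x, y) (h ⊗ₜ tensorMap N N' a b t)
  rw [laxInvComponent_tmul F N N' c h hg,
    laxInvComponent_tmul F N N' c _ (g := (γ₁ ⊗ₘ γ₂) ≫ g)
      (by rw [F.map_comp, hg, reassoc_of% hnat]),
    laxSrcData_gen_tensorHom_comp, ← tensorMap_comp_apply, ← tensorMap_comp_apply, e₁, e₂]

noncomputable def laxInv : (laxTgtData k F N N' c).Coend →ₗ[k] (laxSrcData k F N N' c).Coend :=
  (laxTgtData k F N N' c).desc (laxInvComponent F N N' c) (laxInvComponent_isCowedge F N N' c)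

lemma laxInv_gen {x y : D} (h : (x ⊗ y : D) ⟶ F.obj c)
    {g : (F.objPreimage x ⊗ F.objPreimage y : C) ⟶ c}
    (hg : F.map g = (F.tensorObjPreimageIso x y).hom ≫ h)
    (t : (N.obj x : Type u) ⊗[k] (N'.obj y : Type u)) :
    laxInv F N N' c ((laxTgtData k F N N' c).gen (x, y) (h ⊗ₜ t)) =
      (laxSrcData k F N N' c).gen (F.objPreimage x, F.objPreimage y)
        (g ⊗ₜ tensorMap N N' (F.objObjPreimageIso x).inv (F.objObjPreimageIso y).inv t) :=
  (CoendData.desc_gen _ _ (laxInvComponent_isCowedge F N N' c) (x, y) (h ⊗ₜ t)).trans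
    (laxInvComponent_tmul F N N' c h hg t)

lemma laxInv_laxMap_gen {X Y : C} (g : (X ⊗ Y : C) ⟶ c)
    (t : (N.obj (F.obj X) : Type u) ⊗[k] (N'.obj (F.obj Y) : Type u)) :
    laxInv F N N' c (laxMap F N N' c ((laxSrcData k F N N' c).gen (X, Y) (g ⊗ₜ t))) =
      (laxSrcData k F N N' c).gen (X, Y) (g ⊗ₜ t) := by
  obtain ⟨γ₁, hγ₁⟩ := F.map_surjective (F.objObjPreimageIso (F.obj X)).hom
  obtain ⟨γ₂, hγ₂⟩ := F.map_surjective (F.objObjPreimageIso (F.obj Y)).hom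
  have hg : F.map ((γ₁ ⊗ₘ γ₂) ≫ g) =
      (F.tensorObjPreimageIso _ _).hom ≫ Functor.LaxMonoidal.μ F X Y ≫ F.map g := by
    rw [F.map_comp, Functor.Monoidal.map_tensor_assoc, Functor.tensorObjPreimageIso_hom, hγ₁, hγ₂,
      Category.assoc]
  rw [laxMap_gen, laxInv_gen F N N' c _ hg, laxSrcData_gen_tensorHom_comp,
    ← tensorMap_comp_apply, hγ₁, hγ₂, Iso.inv_hom_id, Iso.inv_hom_id, tensorMap_id,
    LinearMap.id_apply]

lemma laxMap_laxInv_gen {x y : D} (h : (x ⊗ y : D) ⟶ F.obj c)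
    (t : (N.obj x : Type u) ⊗[k] (N'.obj y : Type u)) :
    laxMap F N N' c (laxInv F N N' c ((laxTgtData k F N N' c).gen (x, y) (h ⊗ₜ t))) =
      (laxTgtData k F N N' c).gen (x, y) (h ⊗ₜ t) := by
  obtain ⟨g, hg⟩ := F.map_surjective ((F.tensorObjPreimageIso x y).hom ≫ h)
  have hμ : Functor.LaxMonoidal.μ F _ _ ≫ F.map g =
      ((F.objObjPreimageIso x).hom ⊗ₘ (F.objObjPreimageIso y).hom) ≫ h := by
    rw [hg, Functor.tensorObjPreimageIso_hom, Category.assoc, Functor.Monoidal.μ_δ_assoc]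
  rw [laxInv_gen F N N' c h hg, laxMap_gen, hμ, laxTgtData_gen_tensorHom_comp,
    ← tensorMap_comp_apply, Iso.inv_hom_id, Iso.inv_hom_id, tensorMap_id, LinearMap.id_apply]

noncomputable def laxEquiv : (laxSrcData k F N N' c).Coend ≃ₗ[k] (laxTgtData k F N N' c).Coend :=
  LinearEquiv.ofLinearMap (laxMap F N N' c) (laxInv F N N' c)
    (CoendData.hom_ext _ fun _ => TensorProduct.ext' fun h t => laxMap_laxInv_gen F N N' c h t)
    (CoendData.hom_ext _ fun _ => TensorProduct.ext' fun g t => laxInv_laxMap_gen F N N' c g t)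

end LaxInverse

section Lax

variable (k)
variable {C D : Type u} [Category.{u} C] [Category.{u} D]
  [Preadditive C] [Linear k C] [MonoidalCategory C] [SymmetricCategory C]
  [MonoidalPreadditive C] [MonoidalLinear k C] [RigidCategory C]
  [Preadditive D] [Linear k D] [MonoidalCategory D] [SymmetricCategory D]
  [MonoidalPreadditive D] [MonoidalLinear k D] [RigidCategory D]
  (F : C ⥤ D) [F.Additive] [F.Linear k] [F.Monoidal]

theorem lax_structure_map_iso (hFull : F.Full) (hEssSurj : F.EssSurj)
    (N N' : D ⥤ ModuleCat.{u} k)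
    [N'.Additive] :
    ∃ e : ∀ c : C, (laxSrcData k F N N' c).Coend ≃ₗ[k] (laxTgtData k F N N' c).Coend,
      ∀ (c u v : C) (g : (u ⊗ v : C) ⟶ c)
        (n : N.obj (F.obj u)) (n' : N'.obj (F.obj v)),
        e c ((laxSrcData k F N N' c).gen (u, v)
            (show (((u ⊗ v : C) ⟶ c) ⊗[k]
                ((N.obj (F.obj u) : Type u) ⊗[k] (N'.obj (F.obj v) : Type u))) from
              g ⊗ₜ (n ⊗ₜ n'))) =
          (laxTgtData k F N N' c).gen (F.obj u, F.obj v)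
            (show (((F.obj u ⊗ F.obj v : D) ⟶ F.obj c) ⊗[k]
                ((N.obj (F.obj u) : Type u) ⊗[k] (N'.obj (F.obj v) : Type u))) from
              (Functor.LaxMonoidal.μ F u v ≫ F.map g) ⊗ₜ (n ⊗ₜ n')) := by
  have := hFull
  have := hEssSurj
  exact ⟨fun c => laxEquiv F N N' c, fun c _ _ g n n' => laxMap_gen F N N' c g (n ⊗ₜ n')⟩

end Lax
end

section
/- For a finite group G, subgroups H, K ≤ G, and a commutative ring k, the map sending a double coset HxK ∈ H\G/K to the kG-linear map k[G/H] → k[G/K], gH ↦ Σ_{u ∈ H/(H ∩ ˣK)} guxK, is a k-linear isomorphism k[H\G/K] ≅ Hom_{kG}(k[G/H], k[G/K]). -/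
/-!
Evaluation at the trivial coset identifies `Hom_{kG}(k[G/H], M)` with the `H`-fixed vectors
of `M`. For a finite `H`-set `X`, the `H`-fixed vectors of `k[X]` are the functions constant
on `H`-orbits, so they are free on the orbit sums; and the `H`-orbits on `G/K` are the double
cosets `HxK`. Finally the stabiliser of `xK` in `H` is `H ∩ ˣK`, so the orbit of `xK` is
`{uxK : u ∈ H/(H ∩ ˣK)}`, which turns the orbit sum into the sum of the statement.
-/

open CategoryTheory MulAction

universe u

namespace Representation

section QuotientMap

variable {k G V : Type*} [CommRing k] [Group G] [AddCommGroup V] [Module k V]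
  (σ : Representation k G V) (H : Subgroup G)

noncomputable def ofMulActionQuotientMapEquiv :
    (ofMulAction k G (G ⧸ H)).IntertwiningMap σ ≃ₗ[k] invariants (σ.comp H.subtype) where
  toFun f := ⟨f (.single ((1 : G) : G ⧸ H) 1), fun h => by
    rw [MonoidHom.comp_apply, Subgroup.subtype_apply, ← IntertwiningMap.isIntertwining,
      ofMulAction_single, MulAction.Quotient.smul_mk, smul_eq_mul, mul_one,
      QuotientGroup.eq.2 (by simp : (h : G)⁻¹ * 1 ∈ H)]⟩
  map_add' _ _ := rfl
  map_smul' _ _ := rfl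
  invFun v := ⟨Finsupp.lift V k (G ⧸ H)
      (Quotient.lift (fun g => σ g v) fun a b hab => by
        have hv : σ (a⁻¹ * b) v = v := v.2 ⟨_, QuotientGroup.leftRel_apply.mp hab⟩
        calc σ a v = σ a (σ (a⁻¹ * b) v) := by rw [hv]
          _ = σ b v := by rw [← Module.End.mul_apply, ← map_mul, mul_inv_cancel_left]) ∘ₗ
      (MonoidAlgebra.coeffLinearEquiv k).toLinearMap, fun g => by
    refine MonoidAlgebra.lhom_ext' fun c => LinearMap.ext_ring ?_
    induction c using QuotientGroup.induction_on
    simp [ofMulAction_single, MulAction.Quotient.smul_mk]⟩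
  left_inv f := by
    refine IntertwiningMap.ext (MonoidAlgebra.lhom_ext' fun c => LinearMap.ext_ring ?_)
    induction c using QuotientGroup.induction_on
    simp [← IntertwiningMap.isIntertwining, ofMulAction_single]
  right_inv v := by ext; simp

@[simp]
lemma ofMulActionQuotientMapEquiv_symm_single (v : invariants (σ.comp H.subtype)) (g : G) :
    (ofMulActionQuotientMapEquiv σ H).symm v (.single (g : G ⧸ H) 1) = σ g v := by
  simp [ofMulActionQuotientMapEquiv]

end QuotientMap

section Permutation

variable (k G : Type*) [CommRing k] [Group G] (X : Type*) [MulAction G X]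

lemma ofMulAction_comp_subtype (H : Subgroup G) :
    (ofMulAction k G X).comp H.subtype = ofMulAction k H X := rfl

variable {k G X}

lemma coeff_smul_of_mem_invariants {v : MonoidAlgebra k X}
    (hv : v ∈ invariants (ofMulAction k G X)) (g : G) (x : X) : v.coeff (g • x) = v.coeff x :=
  calc v.coeff (g • x) = (ofMulAction k G X g v).coeff (g • x) := by rw [hv g]
    _ = v.coeff x := by rw [coeff_ofMulAction, inv_smul_smul]

variable (k G X) [Finite X]

noncomputable def finsuppOrbitsEquivInvariants :
    (orbitRel.Quotient G X →₀ k) ≃ₗ[k] invariants (ofMulAction k G X) where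
  toFun a := ⟨.ofCoeff (Finsupp.equivFunOnFinite.symm fun x => a ⟦x⟧), fun g => by
    ext x
    simp [coeff_ofMulAction]⟩
  map_add' _ _ := by ext; simp
  map_smul' _ _ := by ext; simp
  invFun v := Finsupp.equivFunOnFinite.symm fun ω => (v : MonoidAlgebra k X).coeff ω.out
  left_inv a := by ext; simp
  right_inv v := by
    ext x
    obtain ⟨g, hg⟩ : Quotient.out (⟦x⟧ : orbitRel.Quotient G X) ∈ orbit G x :=
      orbitRel_apply.1 (Quotient.mk_out x)
    simp [← hg, coeff_smul_of_mem_invariants v.2]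

variable {X}

lemma finsuppOrbitsEquivInvariants_single (p : X) :
    (finsuppOrbitsEquivInvariants k G X (Finsupp.single ⟦p⟧ 1) : MonoidAlgebra k X) =
      ∑ᶠ y : orbit G p, MonoidAlgebra.single (y : X) 1 := by
  classical
  have := Fintype.ofFinite (orbit G p)
  ext x
  rw [finsum_eq_sum_of_fintype, MonoidAlgebra.coeff_sum, Finsupp.finsetSum_apply]
  have hmem : (⟦p⟧ : orbitRel.Quotient G X) = ⟦x⟧ ↔ x ∈ orbit G p := by
    rw [Quotient.eq, orbitRel_apply, mem_orbit_symm]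
  by_cases hx : x ∈ orbit G p
  · have hy (y : orbit G p) : (y : X) = x ↔ y = ⟨x, hx⟩ := by rw [Subtype.ext_iff]
    simp [finsuppOrbitsEquivInvariants, Finsupp.single_apply, hmem.2 hx, hy]
  · have hy (y : orbit G p) : (y : X) ≠ x := fun h => hx (h ▸ y.2)
    simp [finsuppOrbitsEquivInvariants, Finsupp.single_apply, hmem, hx, hy]

end Permutation

end Representation

namespace Rep

variable {k G : Type u} [CommRing k] [Group G] (H : Subgroup G)

noncomputable abbrev ofMulActionQuotientHomEquiv (A : Rep k G) :
    (ofMulAction k G (G ⧸ H) ⟶ A) ≃ₗ[k] Representation.invariants (A.ρ.comp H.subtype) :=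
  homLinearEquiv _ _ ≪≫ₗ Representation.ofMulActionQuotientMapEquiv A.ρ H

@[simp]
lemma ofMulActionQuotientHomEquiv_symm_single (A : Rep k G)
    (v : Representation.invariants (A.ρ.comp H.subtype)) (g : G) :
    ((ofMulActionQuotientHomEquiv H A).symm v).hom (.single (g : G ⧸ H) 1) = A.ρ g v := by
  simp [homEquiv]

end Rep

namespace MulAction

lemma finsum_quotient_stabilizer_out_smul {G X M : Type*} [Group G] [MulAction G X]
    [AddCommMonoid M] (p : X) (f : X → M) :
    ∑ᶠ u : G ⧸ stabilizer G p, f ((Quotient.out u : G) • p) = ∑ᶠ y : orbit G p, f y := by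
  rw [← finsum_comp_equiv (orbitEquivQuotientStabilizer G p).symm]
  refine finsum_congr fun u => ?_
  conv_rhs => rw [← QuotientGroup.out_eq' u, orbitEquivQuotientStabilizer_symm_apply]

lemma stabilizer_mk_eq_subgroupOf_map_conj {G : Type*} [Group G] (H K : Subgroup G) (x : G) :
    stabilizer H (x : G ⧸ K) = (K.map (MulAut.conj x).toMonoidHom).subgroupOf H := by
  have hG : stabilizer G (x : G ⧸ K) = K.map (MulAut.conj x).toMonoidHom := calc
    _ = stabilizer G (x • ((1 : G) : G ⧸ K)) := by
      rw [MulAction.Quotient.smul_mk, smul_eq_mul, mul_one]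
    _ = _ := by rw [stabilizer_smul_eq_stabilizer_map_conj, stabilizer_quotient]
  rw [← hG]
  rfl

end MulAction

namespace DoubleCoset

variable {G : Type*} [Group G]

def quotientEquivOrbitRelQuotient (H K : Subgroup G) :
    Quotient (H : Set G) K ≃ orbitRel.Quotient H (G ⧸ K) where
  toFun := Quotient.map' (fun g : G => (g : G ⧸ K)) fun a b hab => by
    obtain ⟨h, hh, k, hk, rfl⟩ := rel_iff.1 hab
    refine orbitRel_apply.2 ⟨⟨h, hh⟩⁻¹, QuotientGroup.eq.2 ?_⟩
    simpa [mul_assoc] using K.inv_mem hk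
  invFun := Quotient.lift (Quotient.lift (mk H K) fun a b hab =>
      (eq H K a b).2 ⟨1, H.one_mem, a⁻¹ * b, QuotientGroup.leftRel_apply.1 hab, by group⟩)
    fun c d hcd => by
      induction c using QuotientGroup.induction_on with | H a => ?_
      induction d using QuotientGroup.induction_on with | H b => ?_
      obtain ⟨⟨h, hh⟩, hd⟩ := orbitRel_apply.1 hcd
      exact ((eq H K b a).2 ⟨h, hh, (h * b)⁻¹ * a, QuotientGroup.eq.1 hd, by group⟩).symm
  left_inv q := by
    induction q using Quotient.inductionOn'
    rfl
  right_inv q := by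
    induction q using Quotient.inductionOn' with | h c => ?_
    induction c using QuotientGroup.induction_on
    rfl

@[simp]
lemma quotientEquivOrbitRelQuotient_mk (H K : Subgroup G) (g : G) :
    quotientEquivOrbitRelQuotient H K (mk H K g) = ⟦(g : G ⧸ K)⟧ := rfl

end DoubleCoset

theorem yoshida_lemma (k G : Type u) [CommRing k] [Group G] [Finite G]
    (H K : Subgroup G) :
    ∃ e : ((DoubleCoset.Quotient (H : Set G) (K : Set G)) →₀ k) ≃ₗ[k]
        (Rep.ofMulAction k G (G ⧸ H) ⟶ Rep.ofMulAction k G (G ⧸ K)),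
      ∀ (x g : G),
        (e (Finsupp.single (DoubleCoset.mk H K x) 1)).hom
            (MonoidAlgebra.single (QuotientGroup.mk g : G ⧸ H) 1) =
          ∑ᶠ u : H ⧸ (K.map (MulAut.conj x).toMonoidHom).subgroupOf H,
            MonoidAlgebra.single
              (QuotientGroup.mk (g * ((Quotient.out u : H) : G) * x) : G ⧸ K) (1 : k) := by
  let ρ := (Rep.ofMulAction k G (G ⧸ K)).ρ
  refine ⟨Finsupp.domLCongr (DoubleCoset.quotientEquivOrbitRelQuotient H K) ≪≫ₗ
    Representation.finsuppOrbitsEquivInvariants k H (G ⧸ K) ≪≫ₗ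
    LinearEquiv.ofEq _ _ (congrArg _ (Representation.ofMulAction_comp_subtype k G _ H).symm) ≪≫ₗ
    (Rep.ofMulActionQuotientHomEquiv H (Rep.ofMulAction k G (G ⧸ K))).symm, fun x g => ?_⟩
  calc _ = ρ g (∑ᶠ y : orbit H (x : G ⧸ K), MonoidAlgebra.single (y : G ⧸ K) 1) := by
        rw [LinearEquiv.trans_apply, LinearEquiv.trans_apply, LinearEquiv.trans_apply,
          Finsupp.domLCongr_single, DoubleCoset.quotientEquivOrbitRelQuotient_mk,
          Rep.ofMulActionQuotientHomEquiv_symm_single, LinearEquiv.coe_ofEq_apply,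
          Representation.finsuppOrbitsEquivInvariants_single]
    _ = ∑ᶠ u : H ⧸ stabilizer H (x : G ⧸ K),
          ρ g (MonoidAlgebra.single ((Quotient.out u : H) • (x : G ⧸ K)) 1) := by
        rw [map_finsum _ (Set.toFinite _), MulAction.finsum_quotient_stabilizer_out_smul _
          fun y => ρ g (MonoidAlgebra.single y 1)]
    _ = _ := by
        rw [MulAction.stabilizer_mk_eq_subgroupOf_map_conj]
        refine finsum_congr fun u => ?_
        rw [Representation.ofMulAction_single, mul_assoc]
        rfl
end

section
/- Yoshida's functor from the k-linearized span category of finite G-sets to finitely generated permutation kG-modules is a full and essentially surjective k-linear symmetric monoidal functor, where the monoidal structure on spans is induced by products of G-sets and on permutation modules by tensor product over k with diagonal G-action. -/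
/-!
The matrix coefficient of the linearization of a span `X ←α− S −β→ Y` at `(x, y)` is the
number of `s` with `α s = x` and `β s = y`, and these counts are multiplicative for products
of spans, which gives monoidality. A `G`-equivariant map `k[X] → k[Y]` has matrix
coefficients constant on the `G`-orbits of `X × Y`, while the span given by an orbit
`O ⊆ X × Y` with its two projections has the indicator of `O` as its matrix; so the map is
the combination of orbit spans weighted by its coefficients. Finally, a basis permuted by `G`
makes its index set a `G`-set `X` with `k[X] ≅ V` equivariantly.
-/

open Classical in
/-- The linearization `k[X] → k[Y]`, `x ↦ Σ_{s ∈ α⁻¹(x)} β(s)`, of a span `X ←α− S −β→ Y`. -/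
noncomputable def spanMap (k : Type*) [CommRing k] {X Y S : Type*} [Fintype S]
    (α : S → X) (β : S → Y) : (X →₀ k) →ₗ[k] (Y →₀ k) :=
  Finsupp.lift (Y →₀ k) k X fun x =>
    ∑ s : S, if α s = x then Finsupp.single (β s) (1 : k) else 0

section SpanMap

variable (k : Type*) [CommRing k] {X Y S : Type*} [Fintype S]

theorem spanMap_single_apply (α : S → X) (β : S → Y) (x : X) (c : k) (y : Y) :
    spanMap k α β (Finsupp.single x c) y = c * Nat.card {s // α s = x ∧ β s = y} := by
  classical
  simp [spanMap, Finsupp.single_apply, Finset.sum_ite, Finset.filter_filter,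
    Nat.card_eq_fintype_card, Fintype.card_subtype]

theorem spanMap_prod {X' Y' S' : Type*} [Fintype S'] (α : S → X) (β : S → Y) (α' : S' → X')
    (β' : S' → Y') :
    (finsuppTensorFinsupp' k Y Y').toLinearMap ∘ₗ
        TensorProduct.map (spanMap k α β) (spanMap k α' β') =
      spanMap k (fun p : S × S' => (α p.1, α' p.2)) (fun p => (β p.1, β' p.2)) ∘ₗ
        (finsuppTensorFinsupp' k X X').toLinearMap := by
  ext x x' ⟨y, y'⟩
  have hcard : Nat.card {p : S × S' // (α p.1 = x ∧ α' p.2 = x') ∧ β p.1 = y ∧ β' p.2 = y'} =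
      Nat.card {s // α s = x ∧ β s = y} * Nat.card {s' // α' s' = x' ∧ β' s' = y'} := by
    rw [← Nat.card_prod, ← Nat.card_congr Equiv.subtypeProdEquivProd]
    simp only [and_and_and_comm]
  simp [finsuppTensorFinsupp'_apply_apply, spanMap_single_apply, hcard]

end SpanMap

section Orbits

open MulAction

variable {k G X Y : Type*} [CommRing k] [Group G] [MulAction G X] [MulAction G Y]

theorem apply_single_smul_apply_smul {f : (X →₀ k) →ₗ[k] (Y →₀ k)}
    (hf : ∀ (g : G) (v : X →₀ k), f (Finsupp.lmapDomain k k (g • ·) v) =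
      Finsupp.lmapDomain k k (g • ·) (f v)) (g : G) (x : X) (c : k) (y : Y) :
    f (Finsupp.single (g • x) c) (g • y) = f (Finsupp.single x c) y := by
  simpa [Finsupp.mapDomain_apply (MulAction.injective g)] using
    congr($(hf g (Finsupp.single x c)) (g • y))

variable [Finite X] [Finite Y]

noncomputable def orbitSpanMap (q : orbitRel.Quotient G (X × Y)) : (X →₀ k) →ₗ[k] (Y →₀ k) :=
  haveI := Fintype.ofFinite q.orbit
  spanMap k (fun p : q.orbit => (p : X × Y).1) (fun p => (p : X × Y).2)

open Classical in
theorem orbitSpanMap_single_apply (q : orbitRel.Quotient G (X × Y)) (x : X) (c : k) (y : Y) :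
    orbitSpanMap q (Finsupp.single x c) y = if Quotient.mk'' (x, y) = q then c else 0 := by
  rw [orbitSpanMap, spanMap_single_apply]
  split_ifs with h
  · have : Unique {p : q.orbit // (p : X × Y).1 = x ∧ (p : X × Y).2 = y} :=
      { default := ⟨⟨(x, y), orbitRel.Quotient.mem_orbit.2 h⟩, rfl, rfl⟩
        uniq := fun ⟨⟨_, _⟩, h₁, h₂⟩ => by subst h₁ h₂; rfl }
    simp
  · have : IsEmpty {p : q.orbit // (p : X × Y).1 = x ∧ (p : X × Y).2 = y} :=
      ⟨fun ⟨⟨p, hp⟩, h₁, h₂⟩ => h (by subst h₁ h₂; exact orbitRel.Quotient.mem_orbit.1 hp)⟩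
    simp

theorem mem_span_range_orbitSpanMap {f : (X →₀ k) →ₗ[k] (Y →₀ k)}
    (hf : ∀ (g : G) (v : X →₀ k), f (Finsupp.lmapDomain k k (g • ·) v) =
      Finsupp.lmapDomain k k (g • ·) (f v)) :
    f ∈ Submodule.span k (Set.range (orbitSpanMap (G := G))) := by
  have := Fintype.ofFinite (orbitRel.Quotient G (X × Y))
  let c : orbitRel.Quotient G (X × Y) → k := Quotient.lift (fun p => f (Finsupp.single p.1 1) p.2)
    fun _ _ ⟨g, hg⟩ => hg ▸ apply_single_smul_apply_smul hf g _ 1 _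
  rw [Submodule.mem_span_range_iff_exists_fun]
  refine ⟨c, Finsupp.lhom_ext fun x a => Finsupp.ext fun y => ?_⟩
  have hfa : f (Finsupp.single x a) y = a * f (Finsupp.single x 1) y := by
    rw [← Finsupp.smul_single_one, map_smul, Finsupp.smul_apply, smul_eq_mul]
  simp [orbitSpanMap_single_apply, c, hfa, mul_comm]

end Orbits

section Permutation

variable {k G V ι : Type*} [CommRing k] [Group G] [AddCommGroup V] [Module k V]

theorem Representation.exists_mulAction_of_permutes_basis (ρ : Representation k G V)
    (b : Module.Basis ι k V) (hb : ∀ (g : G) (i : ι), ∃ j, ρ g (b i) = b j) :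
    ∃ _ : MulAction G ι, ∀ (g : G) (i : ι), ρ g (b i) = b (g • i) := by
  rcases subsingleton_or_nontrivial k with _ | _
  · have := Module.subsingleton k V
    exact ⟨MulAction.compHom ι (1 : G →* Equiv.Perm ι), fun _ _ => Subsingleton.elim _ _⟩
  choose σ hσ using hb
  have one_σ (i : ι) : σ 1 i = i := b.injective <| by rw [← hσ, map_one]; rfl
  have mul_σ (g h : G) (i : ι) : σ (g * h) i = σ g (σ h i) :=
    b.injective <| by rw [← hσ, ← hσ, ← hσ, map_mul]; rfl
  exact ⟨{ smul := σ, one_smul := one_σ, mul_smul := mul_σ }, hσ⟩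

theorem Module.Basis.repr_symm_lmapDomain_smul [MulAction G ι] (ρ : Representation k G V)
    (b : Module.Basis ι k V) (hρ : ∀ (g : G) (i : ι), ρ g (b i) = b (g • i)) (g : G)
    (v : ι →₀ k) :
    b.repr.symm (Finsupp.lmapDomain k k (g • ·) v) = ρ g (b.repr.symm v) := by
  have : b.repr.symm.toLinearMap ∘ₗ Finsupp.lmapDomain k k (g • ·) = ρ g ∘ₗ b.repr.symm :=
    Finsupp.lhom_ext fun i c => by simp [hρ]
  exact LinearMap.congr_fun this v

end Permutation

theorem yoshida_full_essSurj_monoidal_general (k : Type) [CommRing k]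
    (G : Type) [Group G] :
    -- fullness
    (∀ (X Y : Type) [Fintype X] [Fintype Y] [MulAction G X] [MulAction G Y]
        (f : (X →₀ k) →ₗ[k] (Y →₀ k)),
        (∀ (g : G) (v : X →₀ k),
          f (Finsupp.lmapDomain k k (fun x : X => g • x) v) =
            Finsupp.lmapDomain k k (fun y : Y => g • y) (f v)) →
        f ∈ Submodule.span k
          {f' : (X →₀ k) →ₗ[k] (Y →₀ k) |
            ∃ (S : Type) (_ : Fintype S) (_ : MulAction G S) (α : S → X) (β : S → Y),
              (∀ (g : G) (s : S), α (g • s) = g • α s) ∧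
              (∀ (g : G) (s : S), β (g • s) = g • β s) ∧
              f' = spanMap k α β}) ∧
    -- essential surjectivity onto f.g. permutation `kG`-modules
    (∀ (V : Type) [AddCommGroup V] [Module k V] (ρ : Representation k G V)
        (ι : Type) (_ : Finite ι) (b : Module.Basis ι k V),
        (∀ (g : G) (i : ι), ∃ j : ι, ρ g (b i) = b j) →
        ∃ (X : Type) (_ : Fintype X) (_ : MulAction G X)
          (e : (X →₀ k) ≃ₗ[k] V),
          ∀ (g : G) (v : X →₀ k),
            e (Finsupp.lmapDomain k k (fun x : X => g • x) v) = ρ g (e v)) ∧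
    -- monoidality (with respect to `k[X] ⊗ k[X'] ≅ k[X × X']`)
    (∀ (X X' Y Y' S S' : Type) [Fintype S] [Fintype S']
        (α : S → X) (β : S → Y) (α' : S' → X') (β' : S' → Y'),
        (finsuppTensorFinsupp' k Y Y').toLinearMap.comp
            (TensorProduct.map (spanMap k α β) (spanMap k α' β')) =
          (spanMap k (fun p : S × S' => (α p.1, α' p.2))
              (fun p => (β p.1, β' p.2))).comp
            (finsuppTensorFinsupp' k X X').toLinearMap) := by
  refine ⟨fun X Y _ _ _ _ f hf => ?_, fun V _ _ ρ ι _ b hb => ?_,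
    fun X X' Y Y' S S' _ _ α β α' β' => spanMap_prod k α β α' β'⟩
  · refine Submodule.span_mono ?_ (mem_span_range_orbitSpanMap hf)
    rintro _ ⟨q, rfl⟩
    exact ⟨q.orbit, Fintype.ofFinite _, inferInstance, _, _, fun _ _ => rfl, fun _ _ => rfl, rfl⟩
  · obtain ⟨_, hρ⟩ := ρ.exists_mulAction_of_permutes_basis b hb
    have := Fintype.ofFinite ι
    exact ⟨ι, inferInstance, inferInstance, b.repr.symm, b.repr_symm_lmapDomain_smul ρ hρ⟩

theorem yoshida_full_essSurj_monoidal (k : Type) [CommRing k]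
    (G : Type) [Group G] [Fintype G] :
    -- fullness
    (∀ (X Y : Type) [Fintype X] [Fintype Y] [MulAction G X] [MulAction G Y]
        (f : (X →₀ k) →ₗ[k] (Y →₀ k)),
        (∀ (g : G) (v : X →₀ k),
          f (Finsupp.lmapDomain k k (fun x : X => g • x) v) =
            Finsupp.lmapDomain k k (fun y : Y => g • y) (f v)) →
        f ∈ Submodule.span k
          {f' : (X →₀ k) →ₗ[k] (Y →₀ k) |
            ∃ (S : Type) (_ : Fintype S) (_ : MulAction G S) (α : S → X) (β : S → Y),
              (∀ (g : G) (s : S), α (g • s) = g • α s) ∧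
              (∀ (g : G) (s : S), β (g • s) = g • β s) ∧
              f' = spanMap k α β}) ∧
    -- essential surjectivity onto f.g. permutation `kG`-modules
    (∀ (V : Type) [AddCommGroup V] [Module k V] (ρ : Representation k G V)
        (ι : Type) (_ : Finite ι) (b : Module.Basis ι k V),
        (∀ (g : G) (i : ι), ∃ j : ι, ρ g (b i) = b j) →
        ∃ (X : Type) (_ : Fintype X) (_ : MulAction G X)
          (e : (X →₀ k) ≃ₗ[k] V),
          ∀ (g : G) (v : X →₀ k),
            e (Finsupp.lmapDomain k k (fun x : X => g • x) v) = ρ g (e v)) ∧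
    -- monoidality (with respect to `k[X] ⊗ k[X'] ≅ k[X × X']`)
    (∀ (X X' Y Y' S S' : Type) [Fintype S] [Fintype S']
        (α : S → X) (β : S → Y) (α' : S' → X') (β' : S' → Y'),
        (finsuppTensorFinsupp' k Y Y').toLinearMap.comp
            (TensorProduct.map (spanMap k α β) (spanMap k α' β')) =
          (spanMap k (fun p : S × S' => (α p.1, α' p.2))
              (fun p => (β p.1, β' p.2))).comp
            (finsuppTensorFinsupp' k X X').toLinearMap) :=
  yoshida_full_essSurj_monoidal_general k G
end

section
/- Let S −a→ G ←b− T be functors of groupoids and let (a/b) be the iso-comma groupoid with projections p : (a/b) → S, q : (a/b) → T. Then the Beck–Chevalley map is an isomorphism of bisets: for all objects s ∈ S, t ∈ T, the map ∫^{i∈(a/b)} T(qi, t) × S(s, pi) → ∫^{g∈G} G(g, bt) × G(as, g) sending [τ, σ]_i to [b(τ)∘γ_i∘a(σ), id]_{as} (where i = (x, y, γ_i : ax → by)) is a bijection, natural in (s, t). -/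
/-!
Statement 17 (Beck–Chevalley for iso-comma squares of groupoids): for functors
`a : S ⥤ G` and `b : T ⥤ G` between groupoids, with iso-comma groupoid `(a/b)` (for
groupoids this is the comma category `Comma a b`) and projections `p = Comma.fst`,
`q = Comma.snd`, the Beck–Chevalley map of bisets is an isomorphism: for all `s : S`,
`t : T` the map
`∫^{i ∈ (a/b)} T(q i, t) × S(s, p i) ⟶ ∫^{g ∈ G} G(g, b t) × G(a s, g)`
sending `[τ, σ]_i` to `[b(τ) ∘ γ_i ∘ a(σ), 𝟙]_{a s}` is a bijection, natural in `(s, t)`.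
-/

open CategoryTheory

universe u₁

namespace BeckChevalley

variable {S T G : Type u₁} [Groupoid.{u₁} S] [Groupoid.{u₁} T] [Groupoid.{u₁} G]
variable (a : S ⥤ G) (b : T ⥤ G)

/-- Representatives of the coend `∫^{i ∈ (a/b)} T(q i, t) × S(s, p i)`, which computes the
composite biset `R_!(q) ∘ R*(p)` at `(s, t)`. -/
def SrcCarrier (s : S) (t : T) : Type u₁ :=
  Σ i : Comma a b, (i.right ⟶ t) × (s ⟶ i.left)

/-- The coend relation on the source. -/
def srcRel (s : S) (t : T) : SrcCarrier a b s t → SrcCarrier a b s t → Prop := fun x y =>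
  ∃ (α : y.1 ⟶ x.1) (τ : x.1.right ⟶ t) (σ : s ⟶ y.1.left),
    x.2 = (τ, σ ≫ α.left) ∧ y.2 = (α.right ≫ τ, σ)

/-- The coend `∫^{i ∈ (a/b)} T(q i, t) × S(s, p i)`. -/
def Src (s : S) (t : T) : Type u₁ := Quot (srcRel a b s t)

/-- Representatives of the coend `∫^{g ∈ G} G(g, b t) × G(a s, g)`, which computes the
composite biset `R*(b) ∘ R_!(a)` at `(s, t)`. -/
def TgtCarrier (s : S) (t : T) : Type u₁ :=
  Σ g : G, (g ⟶ b.obj t) × (a.obj s ⟶ g)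

/-- The coend relation on the target. -/
def tgtRel (s : S) (t : T) : TgtCarrier a b s t → TgtCarrier a b s t → Prop := fun x y =>
  ∃ (α : y.1 ⟶ x.1) (ζ : x.1 ⟶ b.obj t) (ξ : a.obj s ⟶ y.1),
    x.2 = (ζ, ξ ≫ α) ∧ y.2 = (α ≫ ζ, ξ)

/-- The coend `∫^{g ∈ G} G(g, b t) × G(a s, g)`. -/
def Tgt (s : S) (t : T) : Type u₁ := Quot (tgtRel a b s t)

/-!
Both coends are identified with `G(a s, b t)`. For the target this is co-Yoneda:
`[ζ, ξ]_g = [ξ ≫ ζ, 𝟙]_{a s}`. For the source, every `[τ, σ]_i` equals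
`[𝟙, 𝟙]_{(s, t, a(σ) ≫ γ_i ≫ b(τ))}`, the comparison morphism of `(a/b)` having components
`σ` and `τ⁻¹`; this is where the groupoid hypothesis enters. The Beck–Chevalley map is the
composite of the two identifications.
-/

theorem Src.mk_eq_mk_id (s : S) (t : T) (i : Comma a b) (τ : i.right ⟶ t) (σ : s ⟶ i.left) :
    (Quot.mk _ ⟨i, (τ, σ)⟩ : Src a b s t) =
      Quot.mk _ ⟨Comma.mk (L := a) (R := b) (hom := a.map σ ≫ i.hom ≫ b.map τ), (𝟙 t, 𝟙 s)⟩ :=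
  Quot.sound ⟨⟨σ, Groupoid.inv τ, by simp⟩, τ, 𝟙 s, by simp, by simp⟩

theorem Tgt.mk_eq_mk_id (s : S) (t : T) (g : G) (ζ : g ⟶ b.obj t) (ξ : a.obj s ⟶ g) :
    (Quot.mk _ ⟨g, (ζ, ξ)⟩ : Tgt a b s t) = Quot.mk _ ⟨a.obj s, (ξ ≫ ζ, 𝟙 (a.obj s))⟩ :=
  Quot.sound ⟨ξ, ζ, 𝟙 _, by simp, rfl⟩

def srcEquivHom (s : S) (t : T) : Src a b s t ≃ (a.obj s ⟶ b.obj t) where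
  toFun := Quot.lift (fun x => a.map x.2.2 ≫ x.1.hom ≫ b.map x.2.1) <| by
    rintro x y ⟨α, τ, σ, hx, hy⟩
    have hsq : a.map α.left ≫ x.1.hom = y.1.hom ≫ b.map α.right := α.w
    simp only [hx, hy, Functor.map_comp, Category.assoc, reassoc_of% hsq]
  invFun f := Quot.mk _ ⟨Comma.mk (L := a) (R := b) (hom := f), (𝟙 t, 𝟙 s)⟩
  left_inv := Quot.ind fun ⟨i, τ, σ⟩ => (Src.mk_eq_mk_id a b s t i τ σ).symm
  right_inv f := by simp

def tgtEquivHom (s : S) (t : T) : Tgt a b s t ≃ (a.obj s ⟶ b.obj t) where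
  toFun := Quot.lift (fun x => x.2.2 ≫ x.2.1) <| by
    rintro x y ⟨α, ζ, ξ, hx, hy⟩
    simp only [hx, hy, Category.assoc]
  invFun f := Quot.mk _ ⟨a.obj s, (f, 𝟙 (a.obj s))⟩
  left_inv := Quot.ind fun ⟨g, ζ, ξ⟩ => (Tgt.mk_eq_mk_id a b s t g ζ ξ).symm
  right_inv := Category.id_comp

/-- **Beck–Chevalley.**  The map `[τ, σ]_i ↦ [b(τ) ∘ γ_i ∘ a(σ), 𝟙]_{a s}` is a bijection
`∫^{i} T(q i, t) × S(s, p i) ≃ ∫^{g} G(g, b t) × G(a s, g)`, natural in `(s, t)` (the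
formula below, valid for all `s`, `t` and all representatives, expresses this
naturality). -/
theorem beck_chevalley_iso :
    ∃ e : ∀ (s : S) (t : T), Src a b s t ≃ Tgt a b s t,
      ∀ (s : S) (t : T) (i : Comma a b) (τ : i.right ⟶ t) (σ : s ⟶ i.left),
        e s t (Quot.mk _ ⟨i, (τ, σ)⟩) =
          Quot.mk _ ⟨a.obj s, (a.map σ ≫ i.hom ≫ b.map τ, 𝟙 (a.obj s))⟩ :=
  ⟨fun s t => (srcEquivHom a b s t).trans (tgtEquivHom a b s t).symm, fun _ _ _ _ _ => rfl⟩

end BeckChevalley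
end

section
/- For any biset U : Hᵒᵖ × G → Set between groupoids, define the groupoid S(U) whose objects are pairs ((h,g), x) with x ∈ U(h,g) and whose morphisms x → x' (for x ∈ U(h,g), x' ∈ U(h',g')) are pairs (β, α) ∈ H(h,h') × G(g,g') with U(id, α)(x) = U(β, id)(x'), together with the projection functors q : S(U) → H and p : S(U) → G. Then the evaluation map ∫^{x∈S(U)} G(px, g) × H(h, qx) → U(h,g), [α, β]_x ↦ U(β, α)(x), is a bijection natural in (h,g). In particular every biset is isomorphic to the realization of a span of groupoid functors. -/
/-!
Statement 18: every biset is (canonically) isomorphic to the realization of a span.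
For a biset `U : Hᵒᵖ × G ⥤ Type` between groupoids, the category of elements `S(U)` has as
objects pairs `((h,g), x)` with `x ∈ U(h,g)`, and as morphisms `x → x'` pairs
`(β, α) ∈ H(h,h') × G(g,g')` with `U(id, α)(x) = U(β, id)(x')`; it comes with projections
`q : S(U) ⥤ H`, `p : S(U) ⥤ G` (which form a span realizing `U`).  The evaluation map
`∫^{x ∈ S(U)} G(p x, g) × H(h, q x) → U(h,g)`, `[α, β]_x ↦ U(β, α)(x)`, is a bijection,
natural in `(h, g)`.
-/

open CategoryTheory

universe u₁

namespace BisetRealization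

variable {H G : Type u₁} [Groupoid.{u₁} H] [Groupoid.{u₁} G]
variable (U : Hᵒᵖ × G ⥤ Type u₁)

/-- Objects of the groupoid of elements `S(U)`: pairs `((h,g), x)` with `x ∈ U(h,g)`. -/
def El : Type u₁ :=
  Σ hg : H × G, U.obj (Opposite.op hg.1, hg.2)

/-- Morphisms `x' ⟶ x` in `S(U)`: pairs `(β, α)` with `U(id, α)(x') = U(β, id)(x)`.
(We only need these to describe the coend relation below.) -/
def ElHom (x' x : El U) : Type u₁ :=
  { βα : (x'.1.1 ⟶ x.1.1) × (x'.1.2 ⟶ x.1.2) //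
      U.map ((𝟙 (Opposite.op x'.1.1), βα.2) :
          ((Opposite.op x'.1.1, x'.1.2) : Hᵒᵖ × G) ⟶ (Opposite.op x'.1.1, x.1.2)) x'.2 =
        U.map ((βα.1.op, 𝟙 x.1.2) :
          ((Opposite.op x.1.1, x.1.2) : Hᵒᵖ × G) ⟶ (Opposite.op x'.1.1, x.1.2)) x.2 }

/-- Representatives of the coend `∫^{x ∈ S(U)} G(p x, g) × H(h, q x)`, which computes the
realization `R_!(p) ∘ R*(q)` of the span `H ⟵ S(U) ⟶ G` at `(h, g)`. -/
def Carrier (h : H) (g : G) : Type u₁ :=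
  Σ x : El U, (x.1.2 ⟶ g) × (h ⟶ x.1.1)

/-- The coend relation: for a morphism `m : x' ⟶ x` in `S(U)` and a representative
`(γ, δ) ∈ G(p x, g) × H(h, q x')`, identify `⟨x, (γ, δ ≫ β)⟩` with `⟨x', (α ≫ γ, δ)⟩`. -/
def realRel (h : H) (g : G) : Carrier U h g → Carrier U h g → Prop := fun P Q =>
  ∃ (m : ElHom U Q.1 P.1) (γ : P.1.1.2 ⟶ g) (δ : h ⟶ Q.1.1.1),
    P.2 = (γ, δ ≫ m.1.1) ∧ Q.2 = (m.1.2 ≫ γ, δ)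

/-- The coend `∫^{x ∈ S(U)} G(p x, g) × H(h, q x)`. -/
def Realization (h : H) (g : G) : Type u₁ := Quot (realRel U h g)

lemma map_map {h1 h2 h3 : Hᵒᵖ} {g1 g2 g3 : G} (f : h1 ⟶ h2) (f' : h2 ⟶ h3)
    (k : g1 ⟶ g2) (k' : g2 ⟶ g3) (a : U.obj (h1, g1)) :
    U.map (((f', k') : ((h2, g2) : Hᵒᵖ × G) ⟶ (h3, g3)))
        (U.map (((f, k) : ((h1, g1) : Hᵒᵖ × G) ⟶ (h2, g2))) a) =
      U.map (((f ≫ f', k ≫ k') : ((h1, g1) : Hᵒᵖ × G) ⟶ (h3, g3))) a :=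
  (FunctorToTypes.map_comp_apply U
    (((f, k) : ((h1, g1) : Hᵒᵖ × G) ⟶ (h2, g2)))
    (((f', k') : ((h2, g2) : Hᵒᵖ × G) ⟶ (h3, g3))) a).symm

/-- The evaluation map on representatives. -/
def ev (h : H) (g : G) : Carrier U h g → U.obj (Opposite.op h, g) :=
  fun P => U.map (P.2.2.op, P.2.1) P.1.2

lemma ev_rel (h : H) (g : G) {P Q : Carrier U h g} (r : realRel U h g P Q) :
    ev U h g P = ev U h g Q := by
  obtain ⟨x, γP, δP⟩ := P
  obtain ⟨y, γQ, δQ⟩ := Q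
  obtain ⟨⟨⟨β, α⟩, hm⟩, γ, δ, hP, hQ⟩ := r
  simp only [Prod.mk.injEq] at hP hQ
  obtain ⟨hP1, hP2⟩ := hP
  obtain ⟨hQ1, hQ2⟩ := hQ
  simp only [ev]
  rw [hP1, hP2, hQ1, hQ2]
  calc U.map (((δ ≫ β).op, γ) :
          ((Opposite.op x.1.1, x.1.2) : Hᵒᵖ × G) ⟶ (Opposite.op h, g)) x.2
      = U.map ((β.op ≫ δ.op, 𝟙 x.1.2 ≫ γ) :
          ((Opposite.op x.1.1, x.1.2) : Hᵒᵖ × G) ⟶ (Opposite.op h, g)) x.2 := by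
        rw [Category.id_comp]; rfl
    _ = U.map (((δ.op, γ)) :
          ((Opposite.op y.1.1, x.1.2) : Hᵒᵖ × G) ⟶ (Opposite.op h, g))
          (U.map (((β.op, 𝟙 x.1.2)) :
            ((Opposite.op x.1.1, x.1.2) : Hᵒᵖ × G) ⟶ (Opposite.op y.1.1, x.1.2)) x.2) :=
        (map_map U _ _ _ _ _).symm
    _ = U.map (((δ.op, γ)) :
          ((Opposite.op y.1.1, x.1.2) : Hᵒᵖ × G) ⟶ (Opposite.op h, g))
          (U.map (((𝟙 (Opposite.op y.1.1), α)) :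
            ((Opposite.op y.1.1, y.1.2) : Hᵒᵖ × G) ⟶ (Opposite.op y.1.1, x.1.2)) y.2) := by
        rw [hm]
    _ = U.map ((𝟙 (Opposite.op y.1.1) ≫ δ.op, α ≫ γ) :
          ((Opposite.op y.1.1, y.1.2) : Hᵒᵖ × G) ⟶ (Opposite.op h, g)) y.2 :=
        map_map U _ _ _ _ _
    _ = U.map ((δ.op, α ≫ γ) :
          ((Opposite.op y.1.1, y.1.2) : Hᵒᵖ × G) ⟶ (Opposite.op h, g)) y.2 := by
        rw [Category.id_comp]

/-- Forward map on the quotient. -/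
def evQ (h : H) (g : G) : Realization U h g → U.obj (Opposite.op h, g) :=
  Quot.lift (ev U h g) (fun _ _ r => ev_rel U h g r)

/-- Inverse map. -/
def inv' (h : H) (g : G) : U.obj (Opposite.op h, g) → Realization U h g :=
  fun u => Quot.mk _ ⟨⟨(h, g), u⟩, (𝟙 g, 𝟙 h)⟩

lemma key_rel (h : H) (g : G) (x : El U) (γ : x.1.2 ⟶ g) (δ : h ⟶ x.1.1) :
    realRel U h g ⟨x, (γ, δ)⟩ ⟨⟨(h, g), U.map (δ.op, γ) x.2⟩, (𝟙 g, 𝟙 h)⟩ := by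
  refine ⟨⟨(δ, Groupoid.inv γ), ?_⟩, γ, 𝟙 h, by simp, by simp⟩
  show U.map (((𝟙 (Opposite.op h), Groupoid.inv γ)) :
        ((Opposite.op h, g) : Hᵒᵖ × G) ⟶ (Opposite.op h, x.1.2))
      (U.map (((δ.op, γ)) :
        ((Opposite.op x.1.1, x.1.2) : Hᵒᵖ × G) ⟶ (Opposite.op h, g)) x.2) = _
  rw [map_map]
  have h1 : δ.op ≫ 𝟙 (Opposite.op h) = δ.op := Category.comp_id _
  have h2 : γ ≫ Groupoid.inv γ = 𝟙 x.1.2 := Groupoid.comp_inv γ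
  rw [h1, h2]

/-- **Every biset is the realization of a span.**  The evaluation map
`[α, β]_x ↦ U(β, α)(x)` is a bijection `∫^{x ∈ S(U)} G(p x, g) × H(h, q x) ≃ U(h,g)`,
natural in `(h, g)`; in particular the biset `U` is isomorphic to the realization
`R_!(p) ∘ R*(q)` of the span `H ⟵q− S(U) −p⟶ G`. -/
theorem realization_iso :
    ∃ e : ∀ (h : H) (g : G), Realization U h g ≃ U.obj (Opposite.op h, g),
      ∀ (h : H) (g : G) (x : El U) (γ : x.1.2 ⟶ g) (δ : h ⟶ x.1.1),
        e h g (Quot.mk _ ⟨x, (γ, δ)⟩) = U.map (δ.op, γ) x.2 := by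
  refine ⟨fun h g => ⟨evQ U h g, inv' U h g, ?_, ?_⟩, fun h g x γ δ => rfl⟩
  · intro P
    induction P using Quot.ind with
    | _ P =>
      obtain ⟨x, γ, δ⟩ := P
      exact (Quot.sound (key_rel U h g x γ δ)).symm
  · intro u
    show U.map ((𝟙 h).op, 𝟙 g) u = u
    have : (((𝟙 h).op, 𝟙 g) : ((Opposite.op h, g) : Hᵒᵖ × G) ⟶ (Opposite.op h, g)) =
        𝟙 (Opposite.op h, g) := rfl
    rw [this, FunctorToTypes.map_id_apply]

end BisetRealization
end
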